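/- arXiv:1204.6302 — 2 statements merged into one kernel-verified Lean document; each statement's English description precedes it below -/
import Mathlib

section
/- Let A be an n×n nonnegative real matrix with all row sums nonzero, and let L > 0, k ≥ 0 be integers such that A^L is irreducible. Then equality holds on either side (and hence both sides) of min_i ( r_i(A^{k+L})/r_i(A^k) )^{1/L} ≤ ρ(A) ≤ max_i ( r_i(A^{k+L})/r_i(A^k) )^{1/L} if and only if r_i(A^{k+1}) / r_i(A^k) = ρ(A) for every i ∈ {1,…,n}. -/
/-!
Put `x = (r_i(A^k))_i`, a positive vector with `A^m x = (r_i(A^{k+m}))_i`, and `B = A^L`, so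
that `ρ(B) = ρ(A)^L` and the two bounds are the Collatz–Wielandt bounds for `B` and `x`. If `ρ(A)`
equals the upper bound then `Bx ≤ ρ(B) x`. Were this not an equality, irreducibility would make
`(1 + B)^N (ρ(B) x - Bx)` positive for some `N`, and `z = (1 + B)^N x` would satisfy
`Bz < ρ(B) z` in every coordinate, which is impossible. The lower bound is handled the same way,
the lower Collatz–Wielandt bound coming from Gelfand's formula. Finally, `x` and `Ax` are both
nonnegative eigenvectors of the irreducible `B` for `ρ(A)^L`, hence proportional: `Ax = c x`
with `c^L = ρ(A)^L`.
-/

open Matrix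

/-- The spectral radius of a real square matrix: the maximum modulus of its
complex eigenvalues (elements of the spectrum of the matrix over `ℂ`). -/
noncomputable def specRad {n : ℕ} (A : Matrix (Fin n) (Fin n) ℝ) : ℝ :=
  sSup ((fun μ : ℂ => ‖μ‖) '' spectrum ℂ (A.map (fun x : ℝ => (x : ℂ))))

/-- `rowSum A i` is the `i`-th row sum of `A`. -/
noncomputable def rowSum {n : ℕ} (A : Matrix (Fin n) (Fin n) ℝ) (i : Fin n) : ℝ :=
  ∑ j, A i j

/-- A square matrix is irreducible if it cannot be symmetrically permuted to a
nontrivial block upper-triangular form; equivalently, for every nonempty proper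
subset `S` of indices there is a nonzero entry leading from `S` to its complement. -/
def IsIrred {n : ℕ} (A : Matrix (Fin n) (Fin n) ℝ) : Prop :=
  ∀ S : Set (Fin n), S.Nonempty → S ≠ Set.univ → ∃ i ∈ S, ∃ j ∈ Sᶜ, A i j ≠ 0

open Finset Filter Topology

namespace Matrix

section Nonneg

variable {ι : Type*} [Fintype ι] {B : Matrix ι ι ℝ}

lemma mulVec_mono (hB : ∀ i j, 0 ≤ B i j) {v w : ι → ℝ} (h : v ≤ w) : B *ᵥ v ≤ B *ᵥ w :=
  fun i => sum_le_sum fun j _ => mul_le_mul_of_nonneg_left (h j) (hB i j)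

lemma mulVec_nonneg (hB : ∀ i j, 0 ≤ B i j) {v : ι → ℝ} (hv : 0 ≤ v) : 0 ≤ B *ᵥ v := by
  simpa using mulVec_mono hB hv

lemma norm_map_ofReal_mulVec_apply_le (hB : ∀ i j, 0 ≤ B i j) (v : ι → ℂ) (i : ι) :
    ‖(B.map ((↑) : ℝ → ℂ) *ᵥ v) i‖ ≤ (B *ᵥ fun j => ‖v j‖) i :=
  (norm_sum_le _ _).trans_eq (sum_congr rfl fun j _ => by simp [abs_of_nonneg (hB i j)])

variable [DecidableEq ι]

lemma map_ofReal_pow (A : Matrix ι ι ℝ) (m : ℕ) :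
    (A ^ m).map ((↑) : ℝ → ℂ) = A.map (↑) ^ m :=
  map_pow Complex.ofRealHom.mapMatrix A m

lemma le_one_add_mulVec (hB : ∀ i j, 0 ≤ B i j) {v : ι → ℝ} (hv : 0 ≤ v) :
    v ≤ (1 + B) *ᵥ v := by
  simpa [add_mulVec] using mulVec_nonneg hB hv

lemma le_one_add_pow_mulVec (hB : ∀ i j, 0 ≤ B i j) {v : ι → ℝ} (hv : 0 ≤ v) (N : ℕ) :
    v ≤ (1 + B) ^ N *ᵥ v := by
  induction N with
  | zero => simp
  | succ N ih =>
    rw [pow_succ', ← mulVec_mulVec]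
    exact ih.trans (le_one_add_mulVec hB (hv.trans ih))

lemma pow_mulVec_of_mulVec_eq_smul {v : ι → ℝ} {c : ℝ} (h : B *ᵥ v = c • v) (m : ℕ) :
    B ^ m *ᵥ v = c ^ m • v := by
  induction m with
  | zero => simp
  | succ m ih => rw [pow_succ', ← mulVec_mulVec, ih, mulVec_smul, h, smul_smul, pow_succ]

lemma one_add_pow_mulVec_comm (N : ℕ) (v : ι → ℝ) :
    (1 + B) ^ N *ᵥ (B *ᵥ v) = B *ᵥ ((1 + B) ^ N *ᵥ v) := by
  rw [mulVec_mulVec, mulVec_mulVec, ((Commute.one_left B).add_left (Commute.refl B)).pow_left N]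

end Nonneg

end Matrix

section Irreducible

variable {n : ℕ} {B : Matrix (Fin n) (Fin n) ℝ}

lemma IsIrred.pos_of_support_mulVec_subset (hB : ∀ i j, 0 ≤ B i j) (hirr : IsIrred B)
    {v : Fin n → ℝ} (hv : 0 ≤ v) (hv0 : v ≠ 0)
    (hsupp : Function.support (B *ᵥ v) ⊆ Function.support v) (i : Fin n) : 0 < v i := by
  refine (hv i).lt_of_ne fun hi => ?_
  have hproper : {j | v j = 0} ≠ Set.univ := fun h =>
    hv0 (funext fun j => (h ▸ Set.mem_univ j : j ∈ {j | v j = 0}))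
  obtain ⟨a, ha, b, hb, hab⟩ := hirr {j | v j = 0} ⟨i, hi.symm⟩ hproper
  have hpos : 0 < (B *ᵥ v) a :=
    (mul_pos ((hB a b).lt_of_ne' hab) ((hv b).lt_of_ne' hb)).trans_le
      (single_le_sum (f := fun j => B a j * v j) (fun j _ => mul_nonneg (hB a j) (hv j))
        (mem_univ b))
  exact hsupp hpos.ne' ha

lemma IsIrred.exists_one_add_pow_mulVec_pos (hB : ∀ i j, 0 ≤ B i j) (hirr : IsIrred B)
    {y : Fin n → ℝ} (hy : 0 ≤ y) (hy0 : y ≠ 0) :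
    ∃ N, ∀ i, 0 < ((1 + B) ^ N *ᵥ y) i := by
  -- The supports of `(1 + B) ^ t *ᵥ y` grow with `t`, so they stabilise, and a stable support
  -- is invariant under `B`.
  set u : ℕ → Fin n → ℝ := fun t => (1 + B) ^ t *ᵥ y
  have hu_nonneg (t : ℕ) : 0 ≤ u t := hy.trans (le_one_add_pow_mulVec hB hy t)
  have hu_succ (t : ℕ) : u (t + 1) = u t + B *ᵥ u t := by
    simp only [u, pow_succ', ← mulVec_mulVec, add_mulVec, one_mulVec]
  have hsupp_succ (t : ℕ) :
      Function.support (u (t + 1)) = Function.support (u t) ∪ Function.support (B *ᵥ u t) := by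
    ext i
    rw [hu_succ, Set.mem_union]
    simp only [Function.mem_support, Pi.add_apply, ne_eq,
      add_eq_zero_iff_of_nonneg (hu_nonneg t i) (mulVec_nonneg hB (hu_nonneg t) i), not_and_or]
  have hmono : Monotone fun t => Function.support (u t) :=
    monotone_nat_of_le_succ fun t => (hsupp_succ t).symm ▸ Set.subset_union_left
  obtain ⟨N, hN⟩ := WellFoundedGT.monotone_chain_condition ⟨_, hmono⟩
  have hstable : Function.support (u (N + 1)) = Function.support (u N) := (hN _ N.le_succ).symm
  refine ⟨N, hirr.pos_of_support_mulVec_subset hB (hu_nonneg N) (fun h => hy0 ?_) ?_⟩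
  · exact le_antisymm (h ▸ le_one_add_pow_mulVec hB hy N) hy
  · rw [← hstable, hsupp_succ]
    exact Set.subset_union_right

lemma IsIrred.exists_eq_smul_of_mulVec_eq_smul [NeZero n] (hB : ∀ i j, 0 ≤ B i j)
    (hirr : IsIrred B) {x u : Fin n → ℝ} {s : ℝ} (hx : ∀ i, 0 < x i) (hu : 0 ≤ u)
    (hBx : B *ᵥ x = s • x) (hBu : B *ᵥ u = s • u) : ∃ c : ℝ, 0 ≤ c ∧ u = c • x := by
  -- `c • x` is the largest multiple of `x` below `u`, so `u - c • x ≥ 0` vanishes somewhere.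
  obtain ⟨i₀, hi₀⟩ := Finite.exists_min fun i => u i / x i
  set c := u i₀ / x i₀
  refine ⟨c, div_nonneg (hu i₀) (hx i₀).le, ?_⟩
  set v := u - c • x
  have hv : 0 ≤ v := fun i => by
    have := (le_div_iff₀ (hx i)).1 (hi₀ i)
    simp only [v, Pi.sub_apply, Pi.smul_apply, smul_eq_mul, Pi.zero_apply]
    linarith
  have hvi₀ : v i₀ = 0 := by
    simp [v, c, div_mul_cancel₀ _ (hx i₀).ne']
  have hBv : B *ᵥ v = s • v := by
    rw [mulVec_sub, mulVec_smul, hBx, hBu, smul_sub, smul_comm]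
  by_contra hne
  have hsupp : Function.support (B *ᵥ v) ⊆ Function.support v :=
    hBv ▸ Function.support_const_smul_subset s v
  exact (hirr.pos_of_support_mulVec_subset hB hv (sub_ne_zero.2 hne) hsupp i₀).ne' hvi₀

end Irreducible

section Spectral

attribute [local instance] Matrix.linftyOpNormedAddCommGroup Matrix.linftyOpNormedRing
  Matrix.linftyOpNormedAlgebra

lemma Matrix.linfty_opNorm_map_ofReal {ι : Type*} [Fintype ι] (A : Matrix ι ι ℝ) :
    ‖A.map ((↑) : ℝ → ℂ)‖ = ‖A‖ := by
  simp [linfty_opNorm_def]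

variable {n : ℕ} [NeZero n]

lemma specRad_isGreatest (A : Matrix (Fin n) (Fin n) ℝ) :
    IsGreatest ((fun μ : ℂ => ‖μ‖) '' spectrum ℂ (A.map ((↑) : ℝ → ℂ))) (specRad A) :=
  have hfin := (Matrix.finite_spectrum (A.map ((↑) : ℝ → ℂ))).image fun μ : ℂ => ‖μ‖
  ⟨((spectrum.nonempty _).image _).csSup_mem hfin, fun _ ha => le_csSup hfin.bddAbove ha⟩

lemma norm_le_specRad {A : Matrix (Fin n) (Fin n) ℝ} {μ : ℂ}
    (hμ : μ ∈ spectrum ℂ (A.map ((↑) : ℝ → ℂ))) : ‖μ‖ ≤ specRad A :=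
  (specRad_isGreatest A).2 ⟨μ, hμ, rfl⟩

lemma specRad_nonneg (A : Matrix (Fin n) (Fin n) ℝ) : 0 ≤ specRad A := by
  obtain ⟨μ, -, hμ⟩ := (specRad_isGreatest A).1
  exact hμ ▸ norm_nonneg μ

lemma specRad_pow (A : Matrix (Fin n) (Fin n) ℝ) {L : ℕ} (hL : 0 < L) :
    specRad (A ^ L) = specRad A ^ L := by
  refine (specRad_isGreatest _).unique ?_
  rw [map_ofReal_pow, spectrum.map_pow_of_pos _ hL, Set.image_image]
  simp_rw [norm_pow]
  rw [← Set.image_image (· ^ L)]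
  have hnonneg : (fun μ : ℂ => ‖μ‖) '' spectrum ℂ (A.map ((↑) : ℝ → ℂ)) ⊆ Set.Ici 0 := by
    rintro _ ⟨μ, -, rfl⟩
    exact norm_nonneg μ
  exact (pow_left_monotoneOn.mono hnonneg).map_isGreatest (specRad_isGreatest A)

lemma specRad_lt_of_mulVec_lt {B : Matrix (Fin n) (Fin n) ℝ} (hB : ∀ i j, 0 ≤ B i j)
    {z : Fin n → ℝ} (hz : ∀ i, 0 < z i) {s : ℝ} (h : ∀ i, (B *ᵥ z) i < s * z i) :
    specRad B < s := by
  obtain ⟨μ, hμ, hμB⟩ := (specRad_isGreatest B).1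
  have hev : Module.End.HasEigenvalue (toLin' (B.map ((↑) : ℝ → ℂ))) μ :=
    Module.End.hasEigenvalue_iff_mem_spectrum.2 (by rwa [spectrum_toLin'])
  obtain ⟨v, hv⟩ := hev.exists_hasEigenvector
  have hBv : B.map ((↑) : ℝ → ℂ) *ᵥ v = μ • v := by simpa using hv.apply_eq_smul
  -- Compare `B |v| ≥ ‖μ‖ |v|` with `B z < s z` where `|v| ≤ t z` is tight.
  obtain ⟨i, hi⟩ := Finite.exists_max fun j => ‖v j‖ / z j
  set t := ‖v i‖ / z i
  have hvt : (fun j => ‖v j‖) ≤ t • z := fun j => (div_le_iff₀ (hz j)).1 (hi j)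
  have hvi : t * z i = ‖v i‖ := div_mul_cancel₀ _ (hz i).ne'
  have ht : 0 < t := by
    obtain ⟨j, hj⟩ := Function.ne_iff.1 hv.2
    exact (div_pos (norm_pos_iff.2 hj) (hz j)).trans_le (hi j)
  rw [← hμB]
  refine lt_of_mul_lt_mul_right ?_ (norm_nonneg (v i))
  calc ‖μ‖ * ‖v i‖ = ‖(B.map ((↑) : ℝ → ℂ) *ᵥ v) i‖ := by simp [hBv]
    _ ≤ (B *ᵥ fun j => ‖v j‖) i := norm_map_ofReal_mulVec_apply_le hB v i
    _ ≤ (B *ᵥ (t • z)) i := mulVec_mono hB hvt i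
    _ = t * (B *ᵥ z) i := by rw [mulVec_smul, Pi.smul_apply, smul_eq_mul]
    _ < t * (s * z i) := mul_lt_mul_of_pos_left (h i) ht
    _ = s * ‖v i‖ := by rw [mul_left_comm, hvi]

lemma le_specRad_of_smul_le_mulVec {B : Matrix (Fin n) (Fin n) ℝ} (hB : ∀ i j, 0 ≤ B i j)
    {z : Fin n → ℝ} (hz : ∀ i, 0 < z i) {c : ℝ} (hc : 0 ≤ c) (h : c • z ≤ B *ᵥ z) :
    c ≤ specRad B := by
  have hpow (t : ℕ) : c ^ t • z ≤ B ^ t *ᵥ z := by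
    induction t with
    | zero => simp
    | succ t ih =>
      calc c ^ (t + 1) • z = c ^ t • c • z := by rw [smul_smul, pow_succ]
        _ ≤ c ^ t • (B *ᵥ z) := smul_le_smul_of_nonneg_left h (pow_nonneg hc t)
        _ = B *ᵥ (c ^ t • z) := (mulVec_smul B _ z).symm
        _ ≤ B *ᵥ (B ^ t *ᵥ z) := mulVec_mono hB ih
        _ = B ^ (t + 1) *ᵥ z := by rw [mulVec_mulVec, pow_succ']
  have hnorm (t : ℕ) : c ^ t ≤ ‖B.map ((↑) : ℝ → ℂ) ^ t‖ := by
    have hz0 : 0 < ‖z‖ := norm_pos_iff.2 fun h0 => (hz 0).ne' (congrFun h0 0)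
    rw [← map_ofReal_pow, linfty_opNorm_map_ofReal]
    refine le_of_mul_le_mul_right ?_ hz0
    calc c ^ t * ‖z‖ = ‖c ^ t • z‖ := by rw [norm_smul, Real.norm_of_nonneg (pow_nonneg hc t)]
      _ ≤ ‖B ^ t *ᵥ z‖ := (pi_norm_le_iff_of_nonneg (norm_nonneg _)).2 fun i => by
          rw [Pi.smul_apply, Real.norm_of_nonneg (smul_nonneg (pow_nonneg hc t) (hz i).le)]
          exact (hpow t i).trans ((Real.le_norm_self _).trans (norm_le_pi_norm _ i))
      _ ≤ ‖B ^ t‖ * ‖z‖ := linfty_opNorm_mulVec _ _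
  have hgelfand : ENNReal.ofReal c ≤ spectralRadius ℂ (B.map ((↑) : ℝ → ℂ)) := by
    refine ge_of_tendsto (spectrum.pow_norm_pow_one_div_tendsto_nhds_spectralRadius _)
      (eventually_atTop.2 ⟨1, fun t ht => ENNReal.ofReal_le_ofReal ?_⟩)
    rw [one_div, Real.le_rpow_inv_iff_of_pos hc (norm_nonneg _) (by positivity), Real.rpow_natCast]
    exact hnorm t
  obtain ⟨μ, hμ, hμB⟩ := spectrum.exists_nnnorm_eq_spectralRadius (B.map ((↑) : ℝ → ℂ))
  rw [← hμB, ← enorm_eq_nnnorm, ← ofReal_norm] at hgelfand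
  exact ((ENNReal.ofReal_le_ofReal_iff (norm_nonneg μ)).1 hgelfand).trans (norm_le_specRad hμ)

end Spectral

lemma exists_gt_smul_le_of_mul_lt {ι : Type*} [Finite ι] {z w : ι → ℝ} (hz : ∀ i, 0 < z i)
    {s : ℝ} (h : ∀ i, s * z i < w i) : ∃ c, s < c ∧ c • z ≤ w := by
  have hnear : ∀ᶠ c in 𝓝 s, ∀ i, c < w i / z i :=
    eventually_all.2 fun i => eventually_lt_nhds ((lt_div_iff₀ (hz i)).2 (h i))
  obtain ⟨c, hc, hsc⟩ :=
    ((hnear.filter_mono nhdsWithin_le_nhds).and (self_mem_nhdsWithin : Set.Ioi s ∈ 𝓝[>] s)).exists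
  exact ⟨c, hsc, fun i => ((lt_div_iff₀ (hz i)).1 (hc i)).le⟩

section CollatzWielandt

variable {n : ℕ} [NeZero n] {B : Matrix (Fin n) (Fin n) ℝ} {x : Fin n → ℝ} {s : ℝ}

lemma IsIrred.specRad_lt_of_mulVec_le (hB : ∀ i j, 0 ≤ B i j) (hirr : IsIrred B)
    (hx : ∀ i, 0 < x i) (h : B *ᵥ x ≤ s • x) (hne : B *ᵥ x ≠ s • x) : specRad B < s := by
  obtain ⟨N, hN⟩ :=
    hirr.exists_one_add_pow_mulVec_pos hB (sub_nonneg.2 h) (sub_ne_zero.2 hne.symm)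
  refine specRad_lt_of_mulVec_lt hB (z := (1 + B) ^ N *ᵥ x)
    (fun i => (hx i).trans_le (le_one_add_pow_mulVec hB (fun j => (hx j).le) N i)) fun i => ?_
  have := hN i
  rwa [mulVec_sub, mulVec_smul, one_add_pow_mulVec_comm, Pi.sub_apply, sub_pos] at this

lemma IsIrred.lt_specRad_of_smul_le_mulVec (hB : ∀ i j, 0 ≤ B i j) (hirr : IsIrred B)
    (hx : ∀ i, 0 < x i) (hs : 0 ≤ s) (h : s • x ≤ B *ᵥ x) (hne : B *ᵥ x ≠ s • x) :
    s < specRad B := by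
  obtain ⟨N, hN⟩ := hirr.exists_one_add_pow_mulVec_pos hB (sub_nonneg.2 h) (sub_ne_zero.2 hne)
  set z := (1 + B) ^ N *ᵥ x
  have hz : ∀ i, 0 < z i :=
    fun i => (hx i).trans_le (le_one_add_pow_mulVec hB (fun j => (hx j).le) N i)
  obtain ⟨c, hsc, hc⟩ := exists_gt_smul_le_of_mul_lt hz fun i => by
    have := hN i
    rwa [mulVec_sub, mulVec_smul, one_add_pow_mulVec_comm, Pi.sub_apply, sub_pos] at this
  exact hsc.trans_le (le_specRad_of_smul_le_mulVec hB hz (hs.trans hsc.le) hc)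

end CollatzWielandt

lemma rpow_inv_ratio_eq_of_mulVec_eq_smul {n : ℕ} {A : Matrix (Fin n) (Fin n) ℝ} {L : ℕ}
    {x : Fin n → ℝ} (hx : ∀ i, 0 < x i) {s : ℝ} (hs : 0 ≤ s)
    (hL : 0 < L) (h : A *ᵥ x = s • x) (i : Fin n) :
    ((A ^ L *ᵥ x) i / x i) ^ (L : ℝ)⁻¹ = s := by
  rw [pow_mulVec_of_mulVec_eq_smul h, Pi.smul_apply, smul_eq_mul,
    mul_div_cancel_right₀ _ (hx i).ne', Real.pow_rpow_inv_natCast hs hL.ne']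

section Corollary

variable {n : ℕ} [NeZero n] {A : Matrix (Fin n) (Fin n) ℝ} {L : ℕ} {x : Fin n → ℝ}

lemma mulVec_eq_smul_of_pow_mulVec_eq_pow_smul (hA : ∀ i j, 0 ≤ A i j) (hL : 0 < L)
    (hirr : IsIrred (A ^ L)) (hx : ∀ i, 0 < x i) {s : ℝ} (hs : 0 ≤ s)
    (h : A ^ L *ᵥ x = s ^ L • x) : A *ᵥ x = s • x := by
  have hAx : A ^ L *ᵥ (A *ᵥ x) = s ^ L • (A *ᵥ x) := by
    rw [mulVec_mulVec, ← pow_succ, pow_succ', ← mulVec_mulVec, h, mulVec_smul]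
  obtain ⟨c, hc, hcx⟩ := hirr.exists_eq_smul_of_mulVec_eq_smul (pow_apply_nonneg hA L) hx
    (mulVec_nonneg hA fun i => (hx i).le) h hAx
  have hx0 : x ≠ 0 := fun h0 => (hx 0).ne' (congrFun h0 0)
  have hcs : c ^ L = s ^ L :=
    smul_left_injective ℝ hx0 ((pow_mulVec_of_mulVec_eq_smul hcx L).symm.trans h)
  rw [hcx, (pow_left_inj₀ hc hs hL.ne').1 hcs]

theorem specRad_eq_sup'_iff (hA : ∀ i j, 0 ≤ A i j) (hL : 0 < L) (hirr : IsIrred (A ^ L))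
    (hx : ∀ i, 0 < x i) :
    specRad A = univ.sup' univ_nonempty (fun i => ((A ^ L *ᵥ x) i / x i) ^ (L : ℝ)⁻¹) ↔
      A *ᵥ x = specRad A • x := by
  have hB := pow_apply_nonneg hA L
  have hρ := specRad_nonneg A
  have hR (i : Fin n) : 0 ≤ (A ^ L *ᵥ x) i / x i :=
    div_nonneg (mulVec_nonneg hB (fun j => (hx j).le) i) (hx i).le
  refine ⟨fun h => mulVec_eq_smul_of_pow_mulVec_eq_pow_smul hA hL hirr hx hρ ?_, fun h => ?_⟩
  · have hle : A ^ L *ᵥ x ≤ specRad A ^ L • x := fun i => by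
      have := h ▸ le_sup' (fun i => ((A ^ L *ᵥ x) i / x i) ^ (L : ℝ)⁻¹) (mem_univ i)
      rwa [Real.rpow_inv_le_iff_of_pos (hR i) hρ (Nat.cast_pos.2 hL), Real.rpow_natCast,
        div_le_iff₀ (hx i)] at this
    by_contra hne
    exact (specRad_pow A hL ▸ hirr.specRad_lt_of_mulVec_le hB hx hle hne).false
  · simp_rw [rpow_inv_ratio_eq_of_mulVec_eq_smul hx hρ hL h, sup'_const]

theorem specRad_eq_inf'_iff (hA : ∀ i j, 0 ≤ A i j) (hL : 0 < L) (hirr : IsIrred (A ^ L))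
    (hx : ∀ i, 0 < x i) :
    specRad A = univ.inf' univ_nonempty (fun i => ((A ^ L *ᵥ x) i / x i) ^ (L : ℝ)⁻¹) ↔
      A *ᵥ x = specRad A • x := by
  have hB := pow_apply_nonneg hA L
  have hρ := specRad_nonneg A
  have hR (i : Fin n) : 0 ≤ (A ^ L *ᵥ x) i / x i :=
    div_nonneg (mulVec_nonneg hB (fun j => (hx j).le) i) (hx i).le
  refine ⟨fun h => mulVec_eq_smul_of_pow_mulVec_eq_pow_smul hA hL hirr hx hρ ?_, fun h => ?_⟩
  · have hle : specRad A ^ L • x ≤ A ^ L *ᵥ x := fun i => by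
      have := h ▸ inf'_le (fun i => ((A ^ L *ᵥ x) i / x i) ^ (L : ℝ)⁻¹) (mem_univ i)
      rwa [Real.le_rpow_inv_iff_of_pos hρ (hR i) (Nat.cast_pos.2 hL), Real.rpow_natCast,
        le_div_iff₀ (hx i)] at this
    by_contra hne
    exact (specRad_pow A hL ▸ hirr.lt_specRad_of_smul_le_mulVec hB hx (pow_nonneg hρ L) hle
      hne).false
  · simp_rw [rpow_inv_ratio_eq_of_mulVec_eq_smul hx hρ hL h, inf'_const]

end Corollary

lemma rowSum_mul {n : ℕ} (M N : Matrix (Fin n) (Fin n) ℝ) : rowSum (M * N) = M *ᵥ rowSum N := by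
  ext i
  simp only [rowSum, mul_apply, mulVec, dotProduct, mul_sum]
  exact sum_comm

lemma rowSum_pow_pos {n : ℕ} {A : Matrix (Fin n) (Fin n) ℝ} (hA : ∀ i j, 0 ≤ A i j)
    (hr : ∀ i, rowSum A i ≠ 0) (m : ℕ) (i : Fin n) : 0 < rowSum (A ^ m) i := by
  induction m generalizing i with
  | zero => simp [rowSum, one_apply]
  | succ m ih =>
    obtain ⟨j, -, hj⟩ := exists_ne_zero_of_sum_ne_zero (hr i)
    rw [pow_succ', rowSum_mul]
    exact sum_pos' (fun l _ => mul_nonneg (hA i l) (ih l).le)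
      ⟨j, mem_univ j, mul_pos ((hA i j).lt_of_ne' hj) (ih j)⟩

/-- Corollary 1 of the paper.
For a nonnegative matrix `A` with nonzero row sums, `L > 0`, `k ≥ 0`, such that `A^L` is
irreducible, equality holds on either side (and hence both sides) of Liu's bound
`min_i (r_i(A^{k+L})/r_i(A^k))^{1/L} ≤ ρ(A) ≤ max_i (r_i(A^{k+L})/r_i(A^k))^{1/L}`
iff `r_i(A^{k+1}) / r_i(A^k) = ρ(A)` for every `i`. -/
theorem stmt12 {n : ℕ} [NeZero n] (A : Matrix (Fin n) (Fin n) ℝ)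
    (hA : ∀ i j, 0 ≤ A i j) (hr : ∀ i, rowSum A i ≠ 0) (L k : ℕ) (hL : 0 < L)
    (hirr : IsIrred (A ^ L)) :
    (specRad A = Finset.univ.sup' Finset.univ_nonempty
        (fun i => (rowSum (A ^ (k + L)) i / rowSum (A ^ k) i) ^ ((L : ℝ))⁻¹) ↔
      ∀ i : Fin n, rowSum (A ^ (k + 1)) i / rowSum (A ^ k) i = specRad A) ∧
    (specRad A = Finset.univ.inf' Finset.univ_nonempty
        (fun i => (rowSum (A ^ (k + L)) i / rowSum (A ^ k) i) ^ ((L : ℝ))⁻¹) ↔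
      ∀ i : Fin n, rowSum (A ^ (k + 1)) i / rowSum (A ^ k) i = specRad A) := by
  have hx := rowSum_pow_pos hA hr k
  have hpow (m : ℕ) : A ^ m *ᵥ rowSum (A ^ k) = rowSum (A ^ (k + m)) := by
    rw [← rowSum_mul, ← pow_add, add_comm]
  have hratio : (∀ i, rowSum (A ^ (k + 1)) i / rowSum (A ^ k) i = specRad A) ↔
      A *ᵥ rowSum (A ^ k) = specRad A • rowSum (A ^ k) := by
    rw [← hpow 1, pow_one, funext_iff]
    simp only [Pi.smul_apply, smul_eq_mul, div_eq_iff (hx _).ne']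
  rw [hratio, ← hpow L]
  exact ⟨specRad_eq_sup'_iff hA hL hirr hx, specRad_eq_inf'_iff hA hL hirr hx⟩
end

section
/- Let A be an n×n irreducible matrix with nonnegative integer entries and all row sums nonzero, and let k ≥ 0 be an integer. If the vector x = (r_1(A^k),…,r_n(A^k))ᵀ is an eigenvector of A (necessarily corresponding to ρ(A)), then the spectral radius ρ(A) is a nonnegative integer. -/
/-!
Write `x = A ^ k *ᵥ 1` for the vector of row sums of `A ^ k`; it is positive because every row
of `A` has a nonzero entry, and `A *ᵥ x = μ • x`. For a nonnegative matrix a positive eigenvector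
belongs to the spectral radius (Collatz–Wielandt), so `ρ(A) = μ`. On the other hand
`μ ^ m * x i = (A ^ (m + k) *ᵥ 1) i` is a natural number for every `m`, so `μ` is rational and
the `m`-th power of its denominator divides the fixed integer `x i` for all `m`; hence `μ ∈ ℕ`.
-/

open Matrix

namespace Rat

theorem den_pow_dvd_of_pow_mul_eq_intCast {q : ℚ} {a : ℕ} (ha : a ≠ 0) {m : ℕ} {z : ℤ}
    (h : q ^ m * a = z) : q.den ^ m ∣ a := by
  have hq : q ^ m = z * (a : ℚ)⁻¹ := by
    rw [← h, mul_inv_cancel_right₀ (Nat.cast_ne_zero.mpr ha)]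
  simpa [← den_pow, hq, den_intCast, inv_natCast_den_of_pos (Nat.pos_of_ne_zero ha)]
    using mul_den_dvd (z : ℚ) (a : ℚ)⁻¹

theorem den_eq_one_of_forall_pow_mul_eq_intCast {q : ℚ} {a : ℕ} (ha : a ≠ 0)
    (h : ∀ m, ∃ z : ℤ, q ^ m * a = z) : q.den = 1 := by
  by_contra hden
  have htwo : 1 < q.den := by have := q.den_pos; omega
  obtain ⟨z, hz⟩ := h a
  have hle := Nat.le_of_dvd (Nat.pos_of_ne_zero ha) (den_pow_dvd_of_pow_mul_eq_intCast ha hz)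
  exact (Nat.lt_pow_self htwo).not_ge hle

end Rat

theorem Real.exists_natCast_eq_of_forall_pow_mul_eq_natCast {μ a : ℝ} (ha : a ≠ 0)
    (h : ∀ m, ∃ z : ℕ, μ ^ m * a = z) : ∃ z : ℕ, μ = z := by
  obtain ⟨a', rfl⟩ : ∃ a' : ℕ, a = a' := by simpa using h 0
  obtain ⟨b, hb⟩ := h 1
  have ha' : a' ≠ 0 := by exact_mod_cast ha
  set q : ℚ := b / a'
  have hμq : μ = q := by
    push_cast [q]
    rw [eq_div_iff ha, ← hb, pow_one]
  have hden : q.den = 1 := by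
    refine Rat.den_eq_one_of_forall_pow_mul_eq_intCast ha' fun m => ?_
    obtain ⟨z, hz⟩ := h m
    exact ⟨z, by exact_mod_cast hμq ▸ hz⟩
  have hq0 : 0 ≤ q := by positivity
  obtain ⟨z, hz⟩ := Int.eq_ofNat_of_zero_le (Rat.num_nonneg.mpr hq0)
  refine ⟨z, ?_⟩
  rw [hμq, ← (Rat.den_eq_one_iff q).mp hden, hz]
  simp

namespace Matrix

variable {ι : Type*} [Fintype ι]

theorem mem_spectrum_iff_exists_mulVec_eq_smul {K : Type*} [Field K] [DecidableEq ι]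
    {A : Matrix ι ι K} {μ : K} : μ ∈ spectrum K A ↔ ∃ v ≠ 0, A *ᵥ v = μ • v := by
  simp only [← spectrum_toLin', ← Module.End.hasEigenvalue_iff_mem_spectrum,
    Module.End.hasEigenvalue_iff, Submodule.ne_bot_iff, Module.End.mem_eigenspace_iff,
    toLin'_apply]
  tauto

theorem pow_mulVec_eq_pow_smul {R : Type*} [CommSemiring R] [DecidableEq ι] {A : Matrix ι ι R}
    {x : ι → R} {μ : R} (h : A *ᵥ x = μ • x) (m : ℕ) : (A ^ m) *ᵥ x = μ ^ m • x := by
  induction m with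
  | zero => simp
  | succ m ih => rw [pow_succ', ← mulVec_mulVec, ih, mulVec_smul, h, smul_smul, ← pow_succ]

theorem exists_natCast_pow_mulVec_one [DecidableEq ι] {A : Matrix ι ι ℝ}
    (hA : ∀ i j, ∃ z : ℕ, A i j = z) (m : ℕ) (i : ι) : ∃ z : ℕ, (A ^ m *ᵥ 1) i = z := by
  choose B hB using hA
  obtain rfl : A = (of B).map (Nat.castRingHom ℝ) := ext hB
  rw [← Matrix.map_pow]
  exact ⟨∑ j, (of B ^ m) i j, by simp [mulVec, dotProduct]⟩

section Nonneg

variable {A : Matrix ι ι ℝ}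

theorem mulVec_pos (hA : ∀ i j, 0 ≤ A i j) (hrow : ∀ i, ∃ j, A i j ≠ 0) {y : ι → ℝ}
    (hy : ∀ i, 0 < y i) (i : ι) : 0 < (A *ᵥ y) i := by
  obtain ⟨j, hj⟩ := hrow i
  exact Finset.sum_pos' (fun l _ => mul_nonneg (hA i l) (hy l).le)
    ⟨j, Finset.mem_univ j, mul_pos ((hA i j).lt_of_ne' hj) (hy j)⟩

theorem pow_mulVec_one_pos [DecidableEq ι] (hA : ∀ i j, 0 ≤ A i j) (hrow : ∀ i, ∃ j, A i j ≠ 0)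
    (m : ℕ) (i : ι) : 0 < (A ^ m *ᵥ 1) i := by
  induction m generalizing i with
  | zero => simp
  | succ m ih => rw [pow_succ', ← mulVec_mulVec]; exact mulVec_pos hA hrow ih i

theorem norm_mulVec_map_ofReal_le (hA : ∀ i j, 0 ≤ A i j) (v : ι → ℂ) (i : ι) :
    ‖(A.map ((↑) : ℝ → ℂ) *ᵥ v) i‖ ≤ (A *ᵥ fun j => ‖v j‖) i := by
  refine (norm_sum_le _ _).trans_eq (Finset.sum_congr rfl fun j _ => ?_)
  change ‖A.map ((↑) : ℝ → ℂ) i j * v j‖ = A i j * ‖v j‖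
  rw [map_apply, norm_mul, Complex.norm_real, Real.norm_of_nonneg (hA i j)]

/-- Collatz–Wielandt: `‖v‖ ≤ t • x` entrywise for `t = ‖v i‖ / x i` with `i` maximising this
ratio, with equality at `i`. -/
theorem norm_le_of_mulVec_eq_smul_of_pos [Nonempty ι] (hA : ∀ i j, 0 ≤ A i j) {x : ι → ℝ}
    (hx : ∀ i, 0 < x i) {μ : ℝ} (hμ : A *ᵥ x = μ • x) {lam : ℂ} {v : ι → ℂ} (hv : v ≠ 0)
    (hlam : A.map ((↑) : ℝ → ℂ) *ᵥ v = lam • v) : ‖lam‖ ≤ μ := by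
  obtain ⟨i, hi⟩ := Finite.exists_max fun j => ‖v j‖ / x j
  set t := ‖v i‖ / x i
  have hbound : ∀ j, ‖v j‖ ≤ t * x j := fun j => (div_le_iff₀ (hx j)).mp (hi j)
  have hvi : 0 < ‖v i‖ := by
    obtain ⟨j, hj⟩ := Function.ne_iff.mp hv
    exact (div_pos_iff_of_pos_right (hx i)).mp
      ((div_pos (norm_pos_iff.mpr hj) (hx j)).trans_le (hi j))
  refine le_of_mul_le_mul_right ?_ hvi
  calc ‖lam‖ * ‖v i‖ = ‖(A.map ((↑) : ℝ → ℂ) *ᵥ v) i‖ := by simp [hlam]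
    _ ≤ (A *ᵥ fun j => ‖v j‖) i := norm_mulVec_map_ofReal_le hA v i
    _ ≤ (A *ᵥ (t • x)) i :=
      Finset.sum_le_sum fun j _ => mul_le_mul_of_nonneg_left (hbound j) (hA i j)
    _ = μ * ‖v i‖ := by
      rw [mulVec_smul, hμ, smul_smul, Pi.smul_apply, smul_eq_mul, mul_comm t μ, mul_assoc,
        div_mul_cancel₀ _ (hx i).ne']

end Nonneg

end Matrix

theorem rowSum_eq_mulVec_one {n : ℕ} (A : Matrix (Fin n) (Fin n) ℝ) : rowSum A = A *ᵥ 1 := by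
  ext i
  simp [rowSum, mulVec, dotProduct]

theorem specRad_eq_of_mulVec_eq_smul_of_pos {n : ℕ} [NeZero n] {A : Matrix (Fin n) (Fin n) ℝ}
    (hA : ∀ i j, 0 ≤ A i j) {x : Fin n → ℝ} (hx : ∀ i, 0 < x i) {μ : ℝ}
    (hμ : A *ᵥ x = μ • x) : specRad A = μ := by
  have hbound : ∀ lam ∈ spectrum ℂ (A.map ((↑) : ℝ → ℂ)), ‖lam‖ ≤ μ := fun lam hlam => by
    obtain ⟨v, hv, hlam⟩ := mem_spectrum_iff_exists_mulVec_eq_smul.mp hlam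
    exact norm_le_of_mulVec_eq_smul_of_pos hA hx hμ hv hlam
  have hmem : (μ : ℂ) ∈ spectrum ℂ (A.map ((↑) : ℝ → ℂ)) := by
    refine mem_spectrum_iff_exists_mulVec_eq_smul.mpr ⟨fun i => x i, ?_, ?_⟩
    · exact Function.ne_iff.mpr ⟨0, by simpa using (hx 0).ne'⟩
    · ext i
      have h := Complex.ofRealHom.map_mulVec A x i
      rw [hμ, Pi.smul_apply, smul_eq_mul, map_mul] at h
      exact h.symm
  have hμ0 : 0 ≤ μ := (norm_nonneg _).trans (hbound μ hmem)
  refine IsGreatest.csSup_eq ⟨⟨μ, hmem, ?_⟩, ?_⟩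
  · simp [abs_of_nonneg hμ0]
  · rintro _ ⟨lam, hlam, rfl⟩
    exact hbound lam hlam

theorem stmt16_general {n : ℕ} (A : Matrix (Fin n) (Fin n) ℝ)
    (hint : ∀ i j, ∃ z : ℕ, A i j = (z : ℝ))
    (hr : ∀ i, rowSum A i ≠ 0) (k : ℕ)
    (hx : ∃ μ : ℝ, A.mulVec (fun i => rowSum (A ^ k) i) = μ • fun i => rowSum (A ^ k) i) :
    ∃ z : ℕ, specRad A = (z : ℝ) := by
  obtain _ | n := n
  · exact ⟨0, by simp [specRad]⟩
  obtain ⟨μ, hμ⟩ := hx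
  rw [rowSum_eq_mulVec_one] at hμ
  have hA : ∀ i j, 0 ≤ A i j := fun i j => by
    obtain ⟨z, hz⟩ := hint i j
    exact hz ▸ z.cast_nonneg
  have hrow : ∀ i, ∃ j, A i j ≠ 0 := fun i => by
    simpa using Finset.exists_ne_zero_of_sum_ne_zero (hr i)
  have hxpos := pow_mulVec_one_pos hA hrow k
  rw [specRad_eq_of_mulVec_eq_smul_of_pos hA hxpos hμ]
  refine Real.exists_natCast_eq_of_forall_pow_mul_eq_natCast (hxpos 0).ne' fun m => ?_
  obtain ⟨z, hz⟩ := exists_natCast_pow_mulVec_one hint (m + k) 0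
  refine ⟨z, ?_⟩
  rw [← hz, pow_add, ← mulVec_mulVec, pow_mulVec_eq_pow_smul hμ]
  rfl

/-- part of Corollary 2 of the paper, irreducible-power case.
Let `A` be an `n × n` irreducible matrix with nonnegative integer entries and all row sums
nonzero, and let `k ≥ 0`. If `x = (r_1(A^k),…,r_n(A^k))ᵀ` is an eigenvector of `A`
(necessarily corresponding to `ρ(A)`), then `ρ(A)` is a nonnegative integer. -/
theorem stmt16 {n : ℕ} (A : Matrix (Fin n) (Fin n) ℝ)
    (hint : ∀ i j, ∃ z : ℕ, A i j = (z : ℝ)) (hirr : IsIrred A)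
    (hr : ∀ i, rowSum A i ≠ 0) (k : ℕ)
    (hx : ∃ μ : ℝ, A.mulVec (fun i => rowSum (A ^ k) i) = μ • fun i => rowSum (A ^ k) i) :
    ∃ z : ℕ, specRad A = (z : ℝ) :=
  stmt16_general A hint hr k hx
end
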